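/- Let f(z) = z·g(z^{2l+1}) and h(z) = z·g(z)^{2l+1} both be pseudo-involutory, with B-functions B_f and B_h. Then (z·B_h(z)^2) ∘ z^{2l+1} = (z·P_l(z)^2) ∘ (z·B_f(z)^2), where P_l(z) = Σ_{j=0}^{l} ((2l+1)/(2j+1))·C(l+j,2j)·z^j. -/

import Mathlib

open PowerSeries

/-- Composition `f ∘ g` of formal power series (meaningful when the constant
coefficient of `g` is zero). -/
noncomputable def comp (f g : PowerSeries ℚ) : PowerSeries ℚ :=
  PowerSeries.mk fun n =>
    ∑ i ∈ Finset.range (n + 1), (PowerSeries.coeff i f) * (PowerSeries.coeff n (g ^ i))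

/-- A formal power series `f` is pseudo-involutory when its compositional
inverse is `-f(-z)`. -/
def PseudoInvolutory (f : PowerSeries ℚ) : Prop :=
  comp f (-(comp f (-X))) = X ∧ comp (-(comp f (-X))) f = X

/-!
Substituting `z^(2l+1)` into the defining equation of `B_h` and using `h(z^(2l+1)) = f(z)^(2l+1)`
gives `s^(2l+1) B_h(s^(2l+1)) = f^(2l+1) - z^(2l+1)` for `s = z f(z)`. Factor
`x^(2l+1) - y^(2l+1) = (x - y) Σ_j a_{l,j} (xy)^(l-j) (x-y)^(2j)`; with `x = f`, `y = z` and
`f - z = s B_f(s)` the right side becomes `s^(l+1) B_f(s) P_l(s B_f(s)^2)`. Squaring and dividing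
by `s^(2l+1)` shows that both sides of the claim agree after substituting `s`, and substitution of
a nonzero series without constant term is injective.
-/

namespace PowerSeries

lemma coeff_pow_eq_zero_of_lt {R : Type*} [CommRing R] {g : R⟦X⟧} (hg : constantCoeff g = 0)
    {n d : ℕ} (h : n < d) : coeff n (g ^ d) = 0 :=
  coeff_of_lt_order n ((Nat.cast_lt.mpr h).trans_le (le_order_pow_of_constantCoeff_eq_zero d hg))

lemma subst_injective {R : Type*} [CommRing R] [IsDomain R] {a : R⟦X⟧}
    (ha0 : constantCoeff a = 0) (ha : a ≠ 0) :
    Function.Injective (subst a : R⟦X⟧ → R⟦X⟧) := by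
  have hs := HasSubst.of_constantCoeff_zero' ha0
  rw [← coe_substAlgHom hs, injective_iff_map_eq_zero]
  intro f hf
  by_contra hf0
  have hu : constantCoeff (substAlgHom hs f.divXPowOrder) ≠ 0 := by
    rw [coe_substAlgHom, ← coeff_zero_eq_constantCoeff_apply, coeff_subst' hs,
      finsum_eq_single _ 0 fun d hd => by
        simp [coeff_pow_eq_zero_of_lt ha0 (Nat.pos_of_ne_zero hd)]]
    simp [coeff_order hf0]
  rw [← X_pow_order_mul_divXPowOrder (f := f), map_mul, map_pow, substAlgHom_X] at hf
  exact mul_ne_zero (pow_ne_zero _ ha) (fun h => hu (by rw [h, map_zero])) hf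

lemma subst_sub_eq_of_sub_X_eq {R : Type*} [CommRing R] {h B φ : R⟦X⟧}
    (hB : h - X = X * h * B.subst (X * h)) (hφ : constantCoeff φ = 0) :
    h.subst φ - φ = φ * h.subst φ * B.subst (φ * h.subst φ) := by
  have hs := HasSubst.of_constantCoeff_zero' hφ
  have hXh : HasSubst (X * h) := HasSubst.of_constantCoeff_zero' (by simp)
  simpa [subst_sub hs, subst_mul hs, subst_X hs, subst_comp_subst_apply hXh hs]
    using congrArg (subst φ) hB

end PowerSeries

lemma comp_eq_subst (f g : PowerSeries ℚ) (hg : constantCoeff g = 0) : comp f g = f.subst g := by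
  ext n
  rw [comp, coeff_mk, coeff_subst' (HasSubst.of_constantCoeff_zero' hg),
    finsum_eq_sum_of_support_subset _ (s := Finset.range (n + 1))]
  · simp only [smul_eq_mul]
  · intro d hd
    contrapose! hd
    simp [coeff_pow_eq_zero_of_lt hg (by simpa using hd)]

/-- The coefficient `a_{l,j}` of `P_l` in a form that is visibly a natural number
(`twinCoeff_eq_div`). -/
def twinCoeff (l j : ℕ) : ℕ := (l + j + 1).choose (2 * j + 1) + (l + j).choose (2 * j + 1)

lemma twinCoeff_add_two (l j : ℕ) : twinCoeff (l + 2) (j + 1) + twinCoeff l (j + 1) =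
    twinCoeff (l + 1) j + 2 * twinCoeff (l + 1) (j + 1) := by
  have p₁ := Nat.choose_succ_succ' (l + j + 3) (2 * j + 2)
  have p₂ := Nat.choose_succ_succ' (l + j + 2) (2 * j + 1)
  have p₃ := Nat.choose_succ_succ' (l + j + 1) (2 * j + 1)
  have p₄ := Nat.choose_succ_succ' (l + j + 1) (2 * j + 2)
  simp only [twinCoeff]
  ring_nf at p₁ p₂ p₃ p₄ ⊢
  omega

lemma twinCoeff_of_lt {l j : ℕ} (h : l < j) : twinCoeff l j = 0 := by
  simp [twinCoeff, Nat.choose_eq_zero_of_lt, show l + j + 1 < 2 * j + 1 by omega,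
    show l + j < 2 * j + 1 by omega]

lemma twinCoeff_zero_right (l : ℕ) : twinCoeff l 0 = 2 * l + 1 := by
  simp [twinCoeff]
  omega

lemma mul_twinCoeff (l j : ℕ) :
    (2 * j + 1) * twinCoeff l j = (2 * l + 1) * (l + j).choose (2 * j) := by
  rcases lt_or_ge l j with h | h
  · simp [twinCoeff_of_lt h, Nat.choose_eq_zero_of_lt (show l + j < 2 * j by omega)]
  have h₁ : (l + j + 1).choose (2 * j + 1) * (2 * j + 1) = (l + j + 1) * (l + j).choose (2 * j) :=
    (Nat.add_one_mul_choose_eq _ _).symm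
  have h₂ : (l + j).choose (2 * j + 1) * (2 * j + 1) = (l + j).choose (2 * j) * (l - j) := by
    rw [Nat.choose_succ_right_eq, show l + j - 2 * j = l - j by omega]
  calc (2 * j + 1) * twinCoeff l j
      = (l + j + 1) * (l + j).choose (2 * j) + (l - j) * (l + j).choose (2 * j) := by
        rw [twinCoeff]; linear_combination h₁ + h₂
    _ = (2 * l + 1) * (l + j).choose (2 * j) := by rw [← add_mul]; congr 1; omega

lemma twinCoeff_eq_div (l j : ℕ) :
    (twinCoeff l j : ℚ) = (2 * l + 1) / (2 * j + 1) * (l + j).choose (2 * j) := by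
  rw [div_mul_eq_mul_div, eq_div_iff (by positivity)]
  exact_mod_cast (mul_comm _ _).trans (mul_twinCoeff l j)

section TwinPoly

variable {R : Type*} [CommRing R]

def twinPoly (l : ℕ) (u v : R) : R :=
  ∑ j ∈ Finset.range (l + 1), (twinCoeff l j : R) * u ^ (l - j) * v ^ j

lemma pow_mul_twinPoly {l N : ℕ} (hN : l + 1 ≤ N) (m : ℕ) (u v : R) :
    u ^ m * twinPoly l u v =
      ∑ j ∈ Finset.range N, (twinCoeff l j : R) * u ^ (l + m - j) * v ^ j := by
  rw [twinPoly, Finset.mul_sum]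
  refine Finset.sum_subset_zero_on_sdiff (Finset.range_subset_range.mpr hN) ?_ ?_
  · intro j hj
    simp only [Finset.mem_sdiff, Finset.mem_range] at hj
    simp [twinCoeff_of_lt (show l < j by omega)]
  · intro j hj
    rw [show l + m - j = m + (l - j) by simp at hj; omega, pow_add]
    ring

lemma twinPoly_add_two (l : ℕ) (u v : R) :
    twinPoly (l + 2) u v + u ^ 2 * twinPoly l u v = (v + 2 * u) * twinPoly (l + 1) u v := by
  have e₀ := pow_mul_twinPoly (le_refl (l + 3)) 0 u v
  have e₁ := pow_mul_twinPoly (show l + 2 ≤ l + 3 by omega) 1 u v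
  have e₂ := pow_mul_twinPoly (show l + 1 ≤ l + 3 by omega) 2 u v
  simp only [Finset.sum_range_succ' _ (l + 2), Nat.reduceSubDiff, Nat.add_zero, Nat.sub_zero,
    pow_zero, one_mul, pow_one, mul_one, twinCoeff_zero_right] at e₀ e₁ e₂
  have e₃ : v * twinPoly (l + 1) u v = ∑ j ∈ Finset.range (l + 2),
      (twinCoeff (l + 1) j : R) * u ^ (l + 1 - j) * v ^ (j + 1) := by
    rw [twinPoly, Finset.mul_sum]
    exact Finset.sum_congr rfl fun j _ => by ring
  have hrec : ∑ j ∈ Finset.range (l + 2),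
      ((twinCoeff (l + 2) (j + 1) : R) * u ^ (l + 1 - j) * v ^ (j + 1) +
        (twinCoeff l (j + 1) : R) * u ^ (l + 1 - j) * v ^ (j + 1)) =
      ∑ j ∈ Finset.range (l + 2),
        ((twinCoeff (l + 1) j : R) * u ^ (l + 1 - j) * v ^ (j + 1) +
          2 * ((twinCoeff (l + 1) (j + 1) : R) * u ^ (l + 1 - j) * v ^ (j + 1))) := by
    refine Finset.sum_congr rfl fun j _ => ?_
    have := congrArg (Nat.cast : ℕ → R) (twinCoeff_add_two l j)
    push_cast at this
    linear_combination u ^ (l + 1 - j) * v ^ (j + 1) * this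
  rw [Finset.sum_add_distrib, Finset.sum_add_distrib, ← Finset.mul_sum] at hrec
  rw [add_mul, mul_assoc 2 u, e₀, e₁, e₂, e₃]
  push_cast
  linear_combination hrec

lemma map_twinPoly {S F : Type*} [CommRing S] [FunLike F R S] [RingHomClass F R S] (φ : F)
    (l : ℕ) (u v : R) :
    φ (twinPoly l u v) = twinPoly l (φ u) (φ v) := by
  simp [twinPoly]

lemma twinPoly_self_mul (l : ℕ) (u w : R) : twinPoly l u (u * w) = u ^ l * twinPoly l 1 w := by
  rw [twinPoly, twinPoly, Finset.mul_sum]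
  refine Finset.sum_congr rfl fun j hj => ?_
  rw [← pow_sub_mul_pow u (Finset.mem_range_succ_iff.mp hj)]
  ring

lemma sub_mul_twinPoly (x y : R) :
    ∀ l : ℕ, (x - y) * twinPoly l (x * y) ((x - y) ^ 2) = x ^ (2 * l + 1) - y ^ (2 * l + 1)
  | 0 => by simp [twinPoly, twinCoeff_zero_right]
  | 1 => by
    simp [twinPoly, Finset.sum_range_succ, twinCoeff_zero_right, show twinCoeff 1 1 = 1 by decide]
    ring
  | l + 2 => by
    have h₀ := sub_mul_twinPoly x y l
    have h₁ := sub_mul_twinPoly x y (l + 1)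
    linear_combination (x - y) * twinPoly_add_two l (x * y) ((x - y) ^ 2) +
      (x ^ 2 + y ^ 2) * h₁ - (x * y) ^ 2 * h₀

lemma pow_sub_pow_eq_of_sub_eq (l : ℕ) {x y β : R} (h : x - y = x * y * β) :
    x ^ (2 * l + 1) - y ^ (2 * l + 1) = (x * y) ^ (l + 1) * β * twinPoly l 1 (x * y * β ^ 2) := by
  rw [← sub_mul_twinPoly, h, show (x * y * β) ^ 2 = x * y * (x * y * β ^ 2) by ring,
    twinPoly_self_mul]
  ring

end TwinPoly

namespace PowerSeries

variable {R : Type*} [CommRing R]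

lemma subst_twinPoly_one_X {w : R⟦X⟧} (hw : HasSubst w) (l : ℕ) :
    (twinPoly l 1 (X : R⟦X⟧)).subst w = twinPoly l 1 w := by
  rw [← coe_substAlgHom hw, map_twinPoly, map_one, substAlgHom_X]

lemma sum_C_mul_X_pow_eq_twinPoly (l : ℕ) :
    ∑ j ∈ Finset.range (l + 1),
      C (((2 * l + 1 : ℚ) / (2 * j + 1)) * ((l + j).choose (2 * j) : ℚ)) * X ^ j =
      twinPoly l 1 (X : ℚ⟦X⟧) :=
  Finset.sum_congr rfl fun j _ => by rw [one_pow, mul_one, ← twinCoeff_eq_div, map_natCast]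

end PowerSeries

lemma twin_powers_B_identity {R : Type*} [CommRing R] {g f h Bf Bh : R⟦X⟧} (l : ℕ)
    (hfdef : f = X * g.subst (X ^ (2 * l + 1))) (hhdef : h = X * g ^ (2 * l + 1))
    (hBf : f - X = X * f * Bf.subst (X * f)) (hBh : h - X = X * h * Bh.subst (X * h)) :
    (X * f) ^ (2 * l + 1) * Bh.subst ((X * f) ^ (2 * l + 1)) =
      (X * f) ^ (l + 1) * Bf.subst (X * f) * twinPoly l 1 (X * f * Bf.subst (X * f) ^ 2) := by
  have hXk : HasSubst (X ^ (2 * l + 1) : R⟦X⟧) := HasSubst.X_pow (by omega)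
  have hh : h.subst (X ^ (2 * l + 1)) = f ^ (2 * l + 1) := by
    rw [hhdef, subst_mul hXk, subst_pow hXk, subst_X hXk, hfdef, mul_pow]
  have hBh' := subst_sub_eq_of_sub_X_eq hBh
    (by simp : constantCoeff (X ^ (2 * l + 1) : R⟦X⟧) = 0)
  rw [hh, ← mul_pow, pow_sub_pow_eq_of_sub_eq l (y := X) (by rw [hBf, mul_comm X]),
    mul_comm f X] at hBh'
  exact hBh'.symm

theorem twin_powers_B_functions_general (g f h Bf Bh : PowerSeries ℚ) (l : ℕ)
    (hfdef : f = X * comp g (X ^ (2 * l + 1)))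
    (hhdef : h = X * g ^ (2 * l + 1))
    (hBf : f - X = X * f * comp Bf (X * f))
    (hBh : h - X = X * h * comp Bh (X * h)) :
    comp (X * Bh ^ 2) (X ^ (2 * l + 1)) =
      comp
        (X * (∑ j ∈ Finset.range (l + 1),
          PowerSeries.C (((2 * l + 1 : ℚ) / (2 * j + 1)) * ((l + j).choose (2 * j) : ℚ))
            * X ^ j) ^ 2)
        (X * Bf ^ 2) := by
  have hXf : HasSubst (X * f) := HasSubst.of_constantCoeff_zero' (by simp)
  rw [comp_eq_subst _ _ (by simp)] at hfdef hBf hBh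
  rw [comp_eq_subst _ _ (by simp), comp_eq_subst _ _ (by simp), sum_C_mul_X_pow_eq_twinPoly]
  have key := twin_powers_B_identity l hfdef hhdef hBf hBh
  set β : ℚ⟦X⟧ := Bf.subst (X * f) with hβ
  have hXf0 : X * f ≠ 0 := mul_ne_zero X_ne_zero fun hf => by simp [hf] at hBf
  have hXfk : HasSubst ((X * f) ^ (2 * l + 1)) := HasSubst.of_constantCoeff_zero' (by simp)
  have hXfβ : HasSubst (X * f * β ^ 2) := HasSubst.of_constantCoeff_zero' (by simp)
  apply subst_injective (by simp) hXf0
  rw [subst_comp_subst_apply (HasSubst.X_pow (by omega)) hXf,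
    subst_comp_subst_apply (HasSubst.of_constantCoeff_zero' (by simp)) hXf]
  simp only [subst_mul hXf, subst_pow hXf, subst_X hXf, ← hβ, subst_mul hXfk, subst_pow hXfk,
    subst_X hXfk, subst_mul hXfβ, subst_pow hXfβ, subst_X hXfβ, subst_twinPoly_one_X hXfβ]
  apply mul_left_cancel₀ (pow_ne_zero (2 * l + 1) hXf0)
  calc (X * f) ^ (2 * l + 1) * ((X * f) ^ (2 * l + 1) * Bh.subst ((X * f) ^ (2 * l + 1)) ^ 2)
      = ((X * f) ^ (2 * l + 1) * Bh.subst ((X * f) ^ (2 * l + 1))) ^ 2 := by ring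
    _ = _ := by rw [key]; ring

/-- ("The Twin Powers Theorem", `B`-function part.)  Let
`f(z) = z·g(z^{2l+1})` and `h(z) = z·g(z)^{2l+1}` both be pseudo-involutory,
with `B`-functions `Bf` and `Bh`.  Then
`(z·Bh(z)²) ∘ z^{2l+1} = (z·P_l(z)²) ∘ (z·Bf(z)²)`, where
`P_l(z) = Σ_{j=0}^{l} ((2l+1)/(2j+1))·C(l+j,2j)·z^j`. -/
theorem twin_powers_B_functions (g f h Bf Bh : PowerSeries ℚ) (l : ℕ)
    (hg0 : PowerSeries.constantCoeff g ≠ 0)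
    (hfdef : f = X * comp g (X ^ (2 * l + 1)))
    (hhdef : h = X * g ^ (2 * l + 1))
    (hfpi : PseudoInvolutory f) (hhpi : PseudoInvolutory h)
    (hBf : f - X = X * f * comp Bf (X * f))
    (hBh : h - X = X * h * comp Bh (X * h)) :
    comp (X * Bh ^ 2) (X ^ (2 * l + 1)) =
      comp
        (X * (∑ j ∈ Finset.range (l + 1),
          PowerSeries.C (((2 * l + 1 : ℚ) / (2 * j + 1)) * ((l + j).choose (2 * j) : ℚ))
            * X ^ j) ^ 2)
        (X * Bf ^ 2) :=
  twin_powers_B_functions_general g f h Bf Bh l hfdef hhdef hBf hBh
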